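/- arXiv:2109.01434 — 2 statements merged into one kernel-verified Lean document; each statement's English description precedes it below -/
import Mathlib

section
/- Let D ⊂ ℝ³ be bounded measurable with dist(x, D) > 0, f ∈ L²(D) real-valued and bounded, K = (0, k_max], and for k ∈ [-k_max, k_max]\{0} set u^s(x,k) = ∫_D (e^{ik|x-y|}/(4π|x-y|)) f(y) dy. Define N_x : L²(K) → L²(K) by (N_x g)(t) = ∫_K u^s(x, t-s) g(s) ds, P_x : L²(D) → L²(K) by (P_x ψ)(t) = ∫_D e^{it|x-y|} ψ(y) dy, and T_x : L²(D) → L²(D) by (T_x h)(y) = f(y)h(y)/(4π|x-y|). Then N_x = P_x ∘ T_x ∘ P_x*, where P_x* is the adjoint of P_x. -/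
/-!
Both sides are the iterated integral of `e^{i(t-s)|x-y|} f(y) g(s) / (4π|x-y|)` over `K × D`,
taken in the two orders. Since `|x-y| ≥ dist(x, D) > 0` on `D` and `f` is bounded, the kernel is
bounded; `D` has finite measure and `g` is integrable, so Fubini applies. Splitting
`e^{i(t-s)d} = e^{itd} e^{-isd}` then pulls the `s`-independent factor out of the inner integral.
-/

open MeasureTheory Complex

/-- The scattered field `u^s(x,k) = ∫_D e^{ik|x-y|}/(4π|x-y|) f(y) dy`. -/
noncomputable def scatteredField (D : Set (EuclideanSpace ℝ (Fin 3)))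
    (f : EuclideanSpace ℝ (Fin 3) → ℝ) (x : EuclideanSpace ℝ (Fin 3)) (k : ℝ) : ℂ :=
  ∫ y in D, Complex.exp (Complex.I * k * dist x y) / (4 * Real.pi * dist x y) * (f y : ℂ)

theorem integral_integral_mul_swap_of_norm_le {α β 𝕜 : Type*} [MeasurableSpace α]
    [MeasurableSpace β] [RCLike 𝕜] {μ : Measure α} {ν : Measure β} [SFinite μ]
    [IsFiniteMeasure ν] {K : α → β → 𝕜} {g : α → 𝕜}
    (hK : AEStronglyMeasurable (Function.uncurry K) (μ.prod ν)) {C : ℝ}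
    (hKC : ∀ᵐ y ∂ν, ∀ s, ‖K s y‖ ≤ C) (hg : Integrable g μ) :
    ∫ s, (∫ y, K s y ∂ν) * g s ∂μ = ∫ y, ∫ s, K s y * g s ∂μ ∂ν := by
  have hdom : Integrable (fun p : α × β => ‖g p.1‖ * C) (μ.prod ν) := by
    simpa using (hg.norm.mul_const C).mul_prod (integrable_const (1 : ℝ) : Integrable _ ν)
  have hint : Integrable (fun p : α × β => K p.1 p.2 * g p.1) (μ.prod ν) := by
    refine hdom.mono' (hK.mul (hg.aestronglyMeasurable.comp_fst)) ?_
    filter_upwards [Measure.quasiMeasurePreserving_snd.ae hKC] with p hp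
    rw [norm_mul, mul_comm]
    exact mul_le_mul_of_nonneg_left (hp p.1) (norm_nonneg _)
  simp_rw [← integral_mul_const]
  exact integral_integral_swap hint

theorem norm_exp_mul_div_mul_le {k d r a M : ℝ} (hr : 0 < r) (hrd : r ≤ d) (ha : |a| ≤ M) :
    ‖exp (I * k * d) / (4 * Real.pi * d) * (a : ℂ)‖ ≤ M / (4 * Real.pi * r) := by
  have hexp : ‖exp (I * k * d)‖ = 1 := by
    simpa [mul_assoc] using norm_exp_I_mul_ofReal (k * d)
  have hden : ‖(4 * Real.pi * d : ℂ)‖ = 4 * Real.pi * d := by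
    exact_mod_cast Complex.norm_of_nonneg (by positivity [hr.le.trans hrd] : 0 ≤ 4 * Real.pi * d)
  rw [norm_mul, norm_div, hexp, hden, norm_real, Real.norm_eq_abs, one_div_mul_eq_div]
  gcongr
  exact (abs_nonneg a).trans ha

theorem exp_I_mul_sub_mul (t s d : ℂ) :
    exp (I * (t - s) * d) = exp (I * t * d) * exp (-(I * s * d)) := by
  rw [← exp_add]; ring_nf

theorem stmt7_general (D : Set (EuclideanSpace ℝ (Fin 3))) (hD : MeasurableSet D)
    (hDb : Bornology.IsBounded D)
    (x : EuclideanSpace ℝ (Fin 3)) (hx : 0 < Metric.infDist x D)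
    (f : EuclideanSpace ℝ (Fin 3) → ℝ) (hfm : Measurable f)
    (hfb : ∃ M, ∀ y ∈ D, |f y| ≤ M)
    (kmax : ℝ)
    (g : ℝ → ℂ) (hg : IntegrableOn g (Set.Ioc 0 kmax))
    (t : ℝ) :
    (∫ s in Set.Ioc (0:ℝ) kmax, scatteredField D f x (t - s) * g s) =
      ∫ y in D, Complex.exp (Complex.I * t * dist x y) *
        ((f y : ℂ) / (4 * Real.pi * dist x y)) *
        (∫ s in Set.Ioc (0:ℝ) kmax, Complex.exp (-(Complex.I * s * dist x y)) * g s) := by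
  obtain ⟨M, hM⟩ := hfb
  have : IsFiniteMeasure (volume.restrict D) := isFiniteMeasure_restrict.2 hDb.measure_lt_top.ne
  have hbound : ∀ᵐ y ∂volume.restrict D, ∀ s : ℝ,
      ‖exp (I * ↑(t - s) * dist x y) / (4 * Real.pi * dist x y) * (f y : ℂ)‖ ≤
        M / (4 * Real.pi * Metric.infDist x D) :=
    (ae_restrict_mem hD).mono fun y hy s =>
      norm_exp_mul_div_mul_le hx (Metric.infDist_le_dist_of_mem hy) (hM y hy)
  refine (integral_integral_mul_swap_of_norm_le (by fun_prop) hbound hg).trans ?_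
  refine integral_congr_ae (ae_of_all _ fun y => ?_)
  simp only [← integral_const_mul]
  refine integral_congr_ae (ae_of_all _ fun s => ?_)
  push_cast
  rw [exp_I_mul_sub_mul]
  ring

theorem stmt7 (D : Set (EuclideanSpace ℝ (Fin 3))) (hD : MeasurableSet D)
    (hDb : Bornology.IsBounded D)
    (x : EuclideanSpace ℝ (Fin 3)) (hx : 0 < Metric.infDist x D)
    (f : EuclideanSpace ℝ (Fin 3) → ℝ) (hfm : Measurable f)
    (hfb : ∃ M, ∀ y ∈ D, |f y| ≤ M)
    (kmax : ℝ) (hk : 0 < kmax)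
    (g : ℝ → ℂ) (hg : IntegrableOn g (Set.Ioc 0 kmax))
    (t : ℝ) (ht : t ∈ Set.Ioc (0:ℝ) kmax) :
    (∫ s in Set.Ioc (0:ℝ) kmax, scatteredField D f x (t - s) * g s) =
      ∫ y in D, Complex.exp (Complex.I * t * dist x y) *
        ((f y : ℂ) / (4 * Real.pi * dist x y)) *
        (∫ s in Set.Ioc (0:ℝ) kmax, Complex.exp (-(Complex.I * s * dist x y)) * g s) :=
  stmt7_general D hD hDb x hx f hfm hfb kmax g hg t
end

section
/- Under the factorization N_x = P_x T_x P_x* of the multi-frequency near field operator, with f real-valued satisfying c_f ≤ f ≤ C_f a.e. on D (0 < c_f < C_f), the inequality (c_f/(4π r₂)) ‖P_x* g‖²_{L²(D)} ≤ |⟨N_x g, g⟩_{L²(K)}| ≤ (C_f/(4π r₁)) ‖P_x* g‖²_{L²(D)} holds for all g ∈ L²(K), where r₁ = inf{|x-y| : y ∈ D} > 0 and r₂ = sup{|x-y| : y ∈ D} < ∞. -/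
/-!
Since `e^{i(t-s)|x-y|} = e^{it|x-y|} e^{-is|x-y|}`, two applications of Fubini's theorem
turn `⟨N_x g, g⟩` into `∫_D f(y) / (4π|x-y|) |P_x^* g(y)|² dy`, a nonnegative real number.
The weight `f / (4π|x-·|)` lies a.e. on `D` between `c_f / (4π r₂)` and `C_f / (4π r₁)`,
which sandwiches this integral between the corresponding multiples of `‖P_x^* g‖²`.
-/

open MeasureTheory Complex

/-- The operator `P_x^*` applied to `g`: `(P_x^* g)(y) = ∫_K e^{-is|x-y|} g(s) ds`. -/
noncomputable def Pstar (x : EuclideanSpace ℝ (Fin 3)) (kmax : ℝ) (g : ℝ → ℂ)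
    (y : EuclideanSpace ℝ (Fin 3)) : ℂ :=
  ∫ s in Set.Ioc (0:ℝ) kmax, Complex.exp (-(Complex.I * s * dist x y)) * g s

/-- The multi-frequency near field operator applied to `g`:
`(N_x g)(t) = ∫_K u^s(x, t-s) g(s) ds`. -/
noncomputable def Nop (D : Set (EuclideanSpace ℝ (Fin 3)))
    (f : EuclideanSpace ℝ (Fin 3) → ℝ) (x : EuclideanSpace ℝ (Fin 3)) (kmax : ℝ)
    (g : ℝ → ℂ) (t : ℝ) : ℂ :=
  ∫ s in Set.Ioc (0:ℝ) kmax, scatteredField D f x (t - s) * g s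

theorem norm_exp_I_mul_ofReal_mul_ofReal (a b : ℝ) : ‖exp (I * a * b)‖ = 1 := by
  rw [norm_exp]; simp

theorem norm_exp_neg_I_mul_ofReal_mul_ofReal (a b : ℝ) : ‖exp (-(I * a * b))‖ = 1 := by
  rw [norm_exp]; simp

section PhaseOperators

open scoped ComplexConjugate

variable {Y : Type*} {ν : Measure ℝ} {φ : Y → ℝ} {g : ℝ → ℂ}

/- `P_x^*`, `u^s(x, ·)` and `N_x` with the distance `|x - y|` replaced by a measurable phase `φ`
and `f(y) / (4π|x - y|)` by an integrable weight `w`. -/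

noncomputable def phaseAdjoint (ν : Measure ℝ) (φ : Y → ℝ) (g : ℝ → ℂ) (y : Y) :
    ℂ :=
  ∫ s, exp (-(I * s * φ y)) * g s ∂ν

theorem norm_phaseAdjoint_le (y : Y) : ‖phaseAdjoint ν φ g y‖ ≤ ∫ s, ‖g s‖ ∂ν := by
  refine (norm_integral_le_integral_norm _).trans_eq
    (integral_congr_ae (ae_of_all _ fun s => ?_))
  simp only [norm_mul, norm_exp_neg_I_mul_ofReal_mul_ofReal, one_mul]

variable [MeasurableSpace Y] {μ : Measure Y} {w : Y → ℝ}

noncomputable def phaseKernel (μ : Measure Y) (φ : Y → ℝ) (w : Y → ℝ) (k : ℝ) : ℂ :=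
  ∫ y, exp (I * k * φ y) * w y ∂μ

noncomputable def phaseConv (μ : Measure Y) (ν : Measure ℝ) (φ : Y → ℝ) (w : Y → ℝ)
    (g : ℝ → ℂ) (t : ℝ) : ℂ :=
  ∫ s, phaseKernel μ φ w (t - s) * g s ∂ν

theorem aestronglyMeasurable_phaseAdjoint [SFinite ν] (hφ : Measurable φ)
    (hg : AEStronglyMeasurable g ν) : AEStronglyMeasurable (phaseAdjoint ν φ g) μ := by
  refine AEStronglyMeasurable.integral_prod_right' (f := fun p : Y × ℝ =>
    exp (-(I * p.2 * φ p.1)) * g p.2) ?_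
  exact (Measurable.aestronglyMeasurable (by fun_prop)).mul hg.comp_snd

theorem phaseConv_eq_integral [SFinite μ] [SFinite ν] (hφ : Measurable φ)
    (hw : Integrable w μ) (hg : Integrable g ν) (t : ℝ) :
    phaseConv μ ν φ w g t = ∫ y, exp (I * t * φ y) * w y * phaseAdjoint ν φ g y ∂μ := by
  have hsplit : ∀ s y, exp (I * (t - s : ℝ) * φ y) * w y * g s
      = exp (I * t * φ y) * w y * (exp (-(I * s * φ y)) * g s) := by
    intro s y
    rw [show I * (t - s : ℝ) * φ y = I * t * φ y + -(I * s * φ y) by push_cast; ring,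
      exp_add]
    ring
  have hint : Integrable (Function.uncurry fun (s : ℝ) (y : Y) =>
      exp (I * t * φ y) * w y * (exp (-(I * s * φ y)) * g s)) (ν.prod μ) := by
    refine (hg.norm.mul_prod hw.norm).mono' ?_ (ae_of_all _ fun ⟨s, y⟩ => ?_)
    · exact ((Measurable.aestronglyMeasurable (by fun_prop)).mul
        (continuous_ofReal.comp_aestronglyMeasurable hw.1).comp_snd).mul
        ((Measurable.aestronglyMeasurable (by fun_prop)).mul hg.1.comp_fst)
    · simp only [Function.uncurry_apply_pair, norm_mul, norm_exp_I_mul_ofReal_mul_ofReal,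
        norm_exp_neg_I_mul_ofReal_mul_ofReal, norm_real, one_mul]
      rw [mul_comm]
  calc phaseConv μ ν φ w g t
      = ∫ s, ∫ y, exp (I * t * φ y) * w y * (exp (-(I * s * φ y)) * g s) ∂μ ∂ν := by
        simp only [phaseConv, phaseKernel, ← integral_mul_const, hsplit]
    _ = ∫ y, ∫ s, exp (I * t * φ y) * w y * (exp (-(I * s * φ y)) * g s) ∂ν ∂μ :=
        integral_integral_swap hint
    _ = _ := by simp only [integral_const_mul, phaseAdjoint]

theorem integral_phaseConv_mul_conj [SFinite μ] [SFinite ν] (hφ : Measurable φ)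
    (hw : Integrable w μ) (hg : Integrable g ν) :
    ∫ t, phaseConv μ ν φ w g t * conj (g t) ∂ν
      = ((∫ y, w y * ‖phaseAdjoint ν φ g y‖ ^ 2 ∂μ : ℝ) : ℂ) := by
  set P := phaseAdjoint ν φ g
  have hconj : ∀ (t : ℝ) (y : Y),
      exp (I * t * φ y) * conj (g t) = conj (exp (-(I * t * φ y)) * g t) := by
    intro t y
    rw [map_mul, ← exp_conj]
    simp [conj_ofReal]
  have hint : Integrable (Function.uncurry fun (t : ℝ) (y : Y) =>
      w y * P y * (exp (I * t * φ y) * conj (g t))) (ν.prod μ) := by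
    refine (hg.norm.mul_prod (hw.norm.mul_const (∫ s, ‖g s‖ ∂ν))).mono' ?_
      (ae_of_all _ fun ⟨t, y⟩ => ?_)
    · exact ((continuous_ofReal.comp_aestronglyMeasurable hw.1).mul
        (aestronglyMeasurable_phaseAdjoint hφ hg.1)).comp_snd.mul
        ((Measurable.aestronglyMeasurable (by fun_prop)).mul
        (continuous_conj.comp_aestronglyMeasurable hg.1).comp_fst)
    · simp only [Function.uncurry_apply_pair, norm_mul, norm_exp_I_mul_ofReal_mul_ofReal,
        norm_real, one_mul, RCLike.norm_conj]
      calc ‖w y‖ * ‖P y‖ * ‖g t‖ = ‖g t‖ * (‖w y‖ * ‖P y‖) := by ring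
        _ ≤ ‖g t‖ * (‖w y‖ * ∫ s, ‖g s‖ ∂ν) := by
          gcongr; exact norm_phaseAdjoint_le y
  calc ∫ t, phaseConv μ ν φ w g t * conj (g t) ∂ν
      = ∫ t, ∫ y, w y * P y * (exp (I * t * φ y) * conj (g t)) ∂μ ∂ν := by
        refine integral_congr_ae (ae_of_all _ fun t => ?_)
        simp only [phaseConv_eq_integral hφ hw hg, ← integral_mul_const]
        congr 1; ext y; ring
    _ = ∫ y, ∫ t, w y * P y * (exp (I * t * φ y) * conj (g t)) ∂ν ∂μ :=
        integral_integral_swap hint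
    _ = ∫ y, ((w y * ‖P y‖ ^ 2 : ℝ) : ℂ) ∂μ := by
        refine integral_congr_ae (ae_of_all _ fun y => ?_)
        simp only [hconj, integral_const_mul, integral_conj]
        change (w y : ℂ) * P y * conj (P y) = _
        rw [mul_assoc, mul_conj']
        push_cast; rfl
    _ = _ := integral_ofReal

end PhaseOperators

theorem integral_mul_mem_Icc {α : Type*} [MeasurableSpace α] {μ : Measure α} {w h : α → ℝ}
    {a b : ℝ} (hw : AEStronglyMeasurable w μ) (hab : ∀ᵐ y ∂μ, a ≤ w y ∧ w y ≤ b)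
    (hh : Integrable h μ) (h0 : 0 ≤ᵐ[μ] h) :
    ∫ y, w y * h y ∂μ ∈ Set.Icc (a * ∫ y, h y ∂μ) (b * ∫ y, h y ∂μ) := by
  have hwh : Integrable (fun y => w y * h y) μ :=
    hh.bdd_mul hw (hab.mono fun y hy => abs_le_max_abs_abs hy.1 hy.2)
  rw [← integral_const_mul, ← integral_const_mul]
  constructor
  · exact integral_mono_ae (hh.const_mul a) hwh <| by
      filter_upwards [hab, h0] with y hy hy0 using mul_le_mul_of_nonneg_right hy.1 hy0
  · exact integral_mono_ae hwh (hh.const_mul b) <| by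
      filter_upwards [hab, h0] with y hy hy0 using mul_le_mul_of_nonneg_right hy.2 hy0

theorem Bornology.IsBounded.dist_mem_Icc {E : Type*} [PseudoMetricSpace E] {D : Set E}
    (hD : Bornology.IsBounded D) (x : E) {y : E} (hy : y ∈ D) :
    dist x y ∈ Set.Icc (sInf ((fun y => dist x y) '' D)) (sSup ((fun y => dist x y) '' D)) := by
  obtain ⟨R, hR⟩ := hD.subset_closedBall x
  refine ⟨csInf_le ⟨0, ?_⟩ ⟨y, hy, rfl⟩, le_csSup ⟨R, ?_⟩ ⟨y, hy, rfl⟩⟩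
  · rintro _ ⟨z, -, rfl⟩
    exact dist_nonneg
  · rintro _ ⟨z, hz, rfl⟩
    simpa [dist_comm] using hR hz

theorem Pstar_eq_phaseAdjoint (x : EuclideanSpace ℝ (Fin 3)) (kmax : ℝ) :
    Pstar x kmax = phaseAdjoint (volume.restrict (Set.Ioc 0 kmax)) (dist x) :=
  rfl

theorem Nop_eq_phaseConv (D : Set (EuclideanSpace ℝ (Fin 3)))
    (f : EuclideanSpace ℝ (Fin 3) → ℝ) (x : EuclideanSpace ℝ (Fin 3)) (kmax : ℝ) :
    Nop D f x kmax = phaseConv (volume.restrict D) (volume.restrict (Set.Ioc 0 kmax)) (dist x)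
      (fun y => f y / (4 * Real.pi * dist x y)) := by
  ext g t
  refine integral_congr_ae (ae_of_all _ fun s => ?_)
  simp only [scatteredField, phaseKernel]
  congr 1
  refine integral_congr_ae (ae_of_all _ fun y => ?_)
  push_cast
  ring

theorem stmt8_general (D : Set (EuclideanSpace ℝ (Fin 3))) (hD : MeasurableSet D)
    (hDb : Bornology.IsBounded D)
    (x : EuclideanSpace ℝ (Fin 3))
    (f : EuclideanSpace ℝ (Fin 3) → ℝ) (hfm : Measurable f)
    (c_f C_f : ℝ) (hc : 0 < c_f) (hcC : c_f < C_f)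
    (hf : ∀ᵐ y ∂(volume.restrict D), c_f ≤ f y ∧ f y ≤ C_f)
    (r₁ r₂ : ℝ) (hr₁ : r₁ = sInf ((fun y => dist x y) '' D))
    (hr₂ : r₂ = sSup ((fun y => dist x y) '' D)) (hr₁pos : 0 < r₁)
    (kmax : ℝ)
    (g : ℝ → ℂ) (hg : IntegrableOn g (Set.Ioc 0 kmax))
    (hPg : IntegrableOn (fun y => ‖Pstar x kmax g y‖^2) D) :
    c_f / (4 * Real.pi * r₂) * (∫ y in D, ‖Pstar x kmax g y‖^2) ≤
        ‖(∫ t in Set.Ioc (0:ℝ) kmax,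
          Nop D f x kmax g t * (starRingEnd ℂ) (g t))‖ ∧
      ‖(∫ t in Set.Ioc (0:ℝ) kmax,
          Nop D f x kmax g t * (starRingEnd ℂ) (g t))‖ ≤
        C_f / (4 * Real.pi * r₁) * (∫ y in D, ‖Pstar x kmax g y‖^2) := by
  rw [Nop_eq_phaseConv]
  set w : EuclideanSpace ℝ (Fin 3) → ℝ := fun y => f y / (4 * Real.pi * dist x y)
  have hw : ∀ᵐ y ∂(volume.restrict D),
      c_f / (4 * Real.pi * r₂) ≤ w y ∧ w y ≤ C_f / (4 * Real.pi * r₁) := by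
    filter_upwards [hf, ae_restrict_mem hD] with y ⟨hcy, hCy⟩ hy
    obtain ⟨hr₁y, hr₂y⟩ := hr₁ ▸ hr₂ ▸ hDb.dist_mem_Icc x hy
    have hy₀ : 0 < dist x y := hr₁pos.trans_le hr₁y
    exact ⟨div_le_div₀ (hc.le.trans hcy) hcy (by positivity) (by gcongr),
      div_le_div₀ (hc.trans hcC).le hCy (by positivity) (by gcongr)⟩
  have hwm : Measurable w := by fun_prop
  have : IsFiniteMeasure (volume.restrict D) := ⟨by simpa using hDb.measure_lt_top⟩
  have hwi : Integrable w (volume.restrict D) :=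
    Integrable.of_bound hwm.aestronglyMeasurable _
      (hw.mono fun y hy => abs_le_max_abs_abs hy.1 hy.2)
  have hr₂nonneg : 0 ≤ r₂ :=
    hr₂ ▸ Real.sSup_nonneg (by rintro _ ⟨y, -, rfl⟩; exact dist_nonneg)
  have hbounds := integral_mul_mem_Icc hwm.aestronglyMeasurable hw hPg
    (ae_of_all _ fun y => by positivity)
  rw [integral_phaseConv_mul_conj (by fun_prop) hwi hg, ← Pstar_eq_phaseAdjoint,
    Complex.norm_real, Real.norm_of_nonneg (le_trans (by positivity) hbounds.1)]
  exact hbounds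

theorem stmt8 (D : Set (EuclideanSpace ℝ (Fin 3))) (hD : MeasurableSet D)
    (hDb : Bornology.IsBounded D)
    (x : EuclideanSpace ℝ (Fin 3)) (hx : 0 < Metric.infDist x D)
    (f : EuclideanSpace ℝ (Fin 3) → ℝ) (hfm : Measurable f)
    (c_f C_f : ℝ) (hc : 0 < c_f) (hcC : c_f < C_f)
    (hf : ∀ᵐ y ∂(volume.restrict D), c_f ≤ f y ∧ f y ≤ C_f)
    (r₁ r₂ : ℝ) (hr₁ : r₁ = sInf ((fun y => dist x y) '' D))
    (hr₂ : r₂ = sSup ((fun y => dist x y) '' D)) (hr₁pos : 0 < r₁)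
    (kmax : ℝ) (hk : 0 < kmax)
    (g : ℝ → ℂ) (hg : IntegrableOn g (Set.Ioc 0 kmax))
    (hPg : IntegrableOn (fun y => ‖Pstar x kmax g y‖^2) D) :
    c_f / (4 * Real.pi * r₂) * (∫ y in D, ‖Pstar x kmax g y‖^2) ≤
        ‖(∫ t in Set.Ioc (0:ℝ) kmax,
          Nop D f x kmax g t * (starRingEnd ℂ) (g t))‖ ∧
      ‖(∫ t in Set.Ioc (0:ℝ) kmax,
          Nop D f x kmax g t * (starRingEnd ℂ) (g t))‖ ≤
        C_f / (4 * Real.pi * r₁) * (∫ y in D, ‖Pstar x kmax g y‖^2) :=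
  stmt8_general D hD hDb x f hfm c_f C_f hc hcC hf r₁ r₂ hr₁ hr₂ hr₁pos kmax g hg hPg
end
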